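/- Let {λᵢ} be a sequence of reals with 1/(2i+1)² < λᵢ < 1/(2i)² for every positive integer i, and set λ'ᵢ₊₁ = (λᵢ₊₁ + λᵢ₊₂)/2. Then for every i ≥ 1: 0 < (λᵢ − λ'ᵢ₊₁)/(1 − 2λ'ᵢ₊₁) ≤ 36·(λᵢ₊₁ − λ'ᵢ₊₁)/(1 − 2λ'ᵢ₊₁). -/
import Mathlib

set_option maxHeartbeats 1000000 in
theorem stmt_10 (l : ℕ → ℝ)
    (hl : ∀ i : ℕ, 1 ≤ i → 1/(2*(i:ℝ)+1)^2 < l i ∧ l i < 1/(2*(i:ℝ))^2) :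
    ∀ i : ℕ, 1 ≤ i →
      0 < (l i - (l (i+1) + l (i+2))/2) / (1 - 2*((l (i+1) + l (i+2))/2)) ∧
      (l i - (l (i+1) + l (i+2))/2) / (1 - 2*((l (i+1) + l (i+2))/2))
        ≤ 36 * ((l (i+1) - (l (i+1) + l (i+2))/2) / (1 - 2*((l (i+1) + l (i+2))/2))) := by
  intro i hi
  obtain ⟨ha1, ha2⟩ := hl i hi
  obtain ⟨hb1, hb2⟩ := hl (i+1) (by omega)
  obtain ⟨hc1, hc2⟩ := hl (i+2) (by omega)
  have hn : (1:ℝ) ≤ (i:ℝ) := by exact_mod_cast hi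
  push_cast at hb1 hb2 hc1 hc2
  set n : ℝ := (i:ℝ) with hn'
  have h1 : (0:ℝ) < 2*n := by linarith
  have h2 : (0:ℝ) < 2*n+1 := by linarith
  have h3 : (0:ℝ) < 2*n+2 := by linarith
  have h4 : (0:ℝ) < 2*n+3 := by linarith
  have h5 : (0:ℝ) < 2*n+4 := by linarith
  -- b, c small
  have hb16 : l (i+1) < 1/16 := by
    have : (1:ℝ)/(2*(n+1))^2 ≤ 1/16 := by
      rw [div_le_div_iff₀ (by positivity) (by norm_num)]
      nlinarith
    linarith
  have hc16 : l (i+2) < 1/16 := by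
    have : (1:ℝ)/(2*(n+2))^2 ≤ 1/16 := by
      rw [div_le_div_iff₀ (by positivity) (by norm_num)]
      nlinarith
    linarith
  have hd : (0:ℝ) < 1 - 2*((l (i+1) + l (i+2))/2) := by
    have hb0 : 0 < l (i+1) := lt_trans (by positivity) hb1
    have hc0 : 0 < l (i+2) := lt_trans (by positivity) hc1
    linarith
  have hnum : 0 < l i - (l (i+1) + l (i+2))/2 := by
    have hba : (1:ℝ)/(2*(n+1))^2 < 1/(2*n+1)^2 := by
      rw [div_lt_div_iff₀ (by positivity) (by positivity)]
      nlinarith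
    have hca : (1:ℝ)/(2*(n+2))^2 < 1/(2*n+1)^2 := by
      rw [div_lt_div_iff₀ (by positivity) (by positivity)]
      nlinarith
    linarith
  constructor
  · exact div_pos hnum hd
  · rw [show (36:ℝ) * ((l (i+1) - (l (i+1) + l (i+2))/2) / (1 - 2*((l (i+1) + l (i+2))/2)))
        = (36 * (l (i+1) - (l (i+1) + l (i+2))/2)) / (1 - 2*((l (i+1) + l (i+2))/2)) by ring]
    rw [div_le_div_iff_of_pos_right hd]
    have key : (1:ℝ)/(2*n)^2 ≤ 37/2 * (1/(2*(n+1)+1)^2) - 35/2 * (1/(2*(n+2))^2) := by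
      rw [← sub_nonneg]
      have e1 : (0:ℝ) < (2*n)^2 := by positivity
      have e2 : (0:ℝ) < (2*n+3)^2 := by positivity
      have e3 : (0:ℝ) < (2*n+4)^2 := by positivity
      have poly : 0 ≤ 29*(2*n)^3 + (131/2)*(2*n)^2 - 168*(2*n) - 144 := by nlinarith
      have expand : 37/2 * (1/(2*(n+1)+1)^2) - 35/2 * (1/(2*(n+2))^2) - 1/(2*n)^2
          = (29*(2*n)^3 + (131/2)*(2*n)^2 - 168*(2*n) - 144) / ((2*n)^2 * (2*n+3)^2 * (2*n+4)^2) := by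
        field_simp
        ring
      rw [expand]
      positivity
    linarith [key, ha2, hb1, hc2]
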